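/- Let M be an n×n matrix with n ≥ k, and fix j with 1 ≤ j ≤ k. Then det(M) · det(M_{[k],[k]}) = Σ_{i=1}^{k} (−1)^{i+j} det(M_{\{i\},\{j\}}) · det(M_{[k]\setminus\{i\}, [k]\setminus\{j\}}). -/

import Mathlib

/-!
Let `S = {k, …, n-1}` and write `A[I, J]` for the submatrix of `A` on rows `I` and columns `J`.
Expanding `det A[{i} ∪ S, {j} ∪ S]` along its first row gives a linear form in the row `A i`
whose coefficients do not depend on `i`. Summing these determinants against row `j` of `adj A`
therefore replaces that row by `(adj A * A) j = det A • e_j`, which leaves `det A · det A[S, S]`.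
The cofactor `(adj A) j i` is `(-1)^(i+j) det M_{{i},{j}}`; for `i < k` the rows `{i} ∪ S` are
those left after removing `[k] ∖ {i}`, and for `i ∈ S` the determinant has a repeated row.
-/

open Finset

/-- Determinant of the minor of the `ℕ`-indexed matrix `M` obtained by restricting to
rows `{0,...,n-1} \ I` and columns `{0,...,n-1} \ J` (in increasing order). -/
noncomputable def minorDet {R : Type*} [CommRing R] (M : Matrix ℕ ℕ R) (n : ℕ)
    (I J : Finset ℕ) : R :=
  if h : (Finset.range n \ J).card = (Finset.range n \ I).card then
    Matrix.det (Matrix.of fun i j : Fin (Finset.range n \ I).card =>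
      M (((Finset.range n \ I).orderIsoOfFin rfl i : ℕ))
        (((Finset.range n \ J).orderIsoOfFin h j : ℕ)))
  else 0

namespace Matrix

variable {R : Type*} [CommRing R]

theorem sum_adjugate_mul_apply {ι : Type*} [Fintype ι] [DecidableEq ι] (A : Matrix ι ι R)
    (j c : ι) : ∑ i, A.adjugate j i * A i c = if j = c then A.det else 0 := by
  simpa [mul_apply, one_apply] using congrFun (congrFun A.adjugate_mul j) c

theorem det_mul_det_submatrix_eq_sum_adjugate_mul {ι : Type*} [Fintype ι] [DecidableEq ι]
    (A : Matrix ι ι R) (j : ι) {c : ℕ} (e : Fin c → ι) (he : ∀ t, e t ≠ j) :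
    A.det * (A.submatrix e e).det =
      ∑ i, A.adjugate j i * (A.submatrix (Fin.cons i e) (Fin.cons j e)).det := by
  set cols : Fin (c + 1) → ι := Fin.cons j e
  set D : Fin (c + 1) → R := fun b =>
    (-1) ^ (b : ℕ) * (A.submatrix e (cols ∘ b.succAbove)).det
  have hlaplace : ∀ i, (A.submatrix (Fin.cons i e) cols).det = ∑ b, A i (cols b) * D b :=
    fun i => by
      rw [det_succ_row_zero]
      refine sum_congr rfl fun b _ => ?_
      simp only [D, submatrix_apply, Fin.cons_zero, submatrix_submatrix, Fin.cons_comp_succ]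
      ring
  have hcols : ∀ b, j = cols b ↔ b = 0 := fun b => by
    refine Fin.cases (by simp [cols]) (fun t => ?_) b
    simpa [cols] using (he t).symm
  calc A.det * (A.submatrix e e).det = A.det * D 0 := by
        simp [D, cols, Fin.cons_comp_succ]
    _ = ∑ b, (if j = cols b then A.det else 0) * D b := by simp [hcols]
    _ = ∑ b, (∑ i, A.adjugate j i * A i (cols b)) * D b := by
      simp only [sum_adjugate_mul_apply]
    _ = ∑ i, A.adjugate j i * (A.submatrix (Fin.cons i e) cols).det := by
      simp only [hlaplace, mul_sum, sum_mul, mul_assoc]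
      exact sum_comm

theorem det_submatrix_cons_eq_zero {ι κ : Type*} [Fintype κ] [DecidableEq κ]
    (A : Matrix ι κ R) {c : ℕ} {i : ι} {e : Fin c → ι} (t : Fin c) (ht : e t = i)
    (g : Fin (c + 1) → κ) : (A.submatrix (Fin.cons i e) g).det = 0 :=
  det_zero_of_row_eq (Fin.succ_ne_zero t).symm (funext fun b => by simp [ht])

end Matrix

def complRangeEnum (n k : ℕ) (t : Fin (n - k)) : Fin n :=
  ⟨k + t, by omega⟩

theorem complRangeEnum_strictMono (n k : ℕ) : StrictMono (complRangeEnum n k) :=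
  fun _ _ h => Nat.add_lt_add_left h k

theorem le_complRangeEnum (n k : ℕ) (t : Fin (n - k)) : k ≤ (complRangeEnum n k t : ℕ) :=
  Nat.le_add_right k t

theorem exists_complRangeEnum_eq {n k : ℕ} {i : Fin n} (hi : k ≤ (i : ℕ)) :
    ∃ t, complRangeEnum n k t = i :=
  ⟨⟨i - k, by omega⟩, Fin.ext (Nat.add_sub_cancel' hi)⟩

theorem card_range_sdiff_range_sdiff_singleton {n k i : ℕ} (hk : k ≤ n) :
    #(range n \ (range k \ {i})) = if i < k then n - k + 1 else n - k := by
  rw [card_sdiff_of_subset (sdiff_subset.trans (range_subset_range.2 hk)), card_range]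
  split_ifs with hi
  · rw [card_sdiff_of_subset (by simpa using hi), card_range, card_singleton]
    omega
  · rw [sdiff_singleton_eq_erase, erase_eq_self.2 (by simpa using hi), card_range]

section minorDet

variable {R : Type*} [CommRing R] (M : Matrix ℕ ℕ R)

theorem minorDet_eq_det_submatrix {n c : ℕ} {I J : Finset ℕ}
    {f g : Fin c → Fin n} (hf : StrictMono f) (hg : StrictMono g)
    (hfI : ∀ t, (f t : ℕ) ∉ I) (hgJ : ∀ t, (g t : ℕ) ∉ J)
    (hI : #(range n \ I) = c) (hJ : #(range n \ J) = c) :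
    minorDet M n I J = ((M.submatrix Fin.val Fin.val).submatrix f g).det := by
  subst hI
  rw [minorDet, dif_pos hJ]
  have hrows := orderEmbOfFin_unique rfl (fun t => by simpa using hfI t)
    (Fin.val_strictMono.comp hf)
  have hcols := orderEmbOfFin_unique hJ (fun t => by simpa using hgJ t)
    (Fin.val_strictMono.comp hg)
  congr 1
  ext a b
  simp [← hrows, ← hcols]

theorem minorDet_empty_eq_det (n : ℕ) :
    minorDet M n ∅ ∅ = (M.submatrix (Fin.val : Fin n → ℕ) Fin.val).det :=
  minorDet_eq_det_submatrix M strictMono_id strictMono_id (by simp) (by simp) (by simp) (by simp)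

theorem minorDet_singleton_eq_det_submatrix_succAbove {N : ℕ} (i j : Fin (N + 1)) :
    minorDet M (N + 1) {(i : ℕ)} {(j : ℕ)} =
      ((M.submatrix Fin.val Fin.val).submatrix i.succAbove j.succAbove).det := by
  have hcard : ∀ a : Fin (N + 1), #(range (N + 1) \ {(a : ℕ)}) = N := fun a => by
    rw [card_sdiff_of_subset (singleton_subset_iff.2 (mem_range.2 a.isLt)), card_range,
      card_singleton, Nat.add_sub_cancel]
  exact minorDet_eq_det_submatrix M (Fin.strictMono_succAbove i) (Fin.strictMono_succAbove j)
    (fun t => by simp [Fin.val_eq_val, Fin.succAbove_ne])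
    (fun t => by simp [Fin.val_eq_val, Fin.succAbove_ne]) (hcard i) (hcard j)

theorem minorDet_range_eq_det_submatrix {n k : ℕ} (hk : k ≤ n) :
    minorDet M n (range k) (range k) = ((M.submatrix Fin.val Fin.val).submatrix
      (complRangeEnum n k) (complRangeEnum n k)).det := by
  have hcard : #(range n \ range k) = n - k := by
    rw [card_sdiff_of_subset (range_subset_range.2 hk), card_range, card_range]
  have hnot : ∀ t, (complRangeEnum n k t : ℕ) ∉ range k := by simp [le_complRangeEnum]
  exact minorDet_eq_det_submatrix M (complRangeEnum_strictMono n k)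
    (complRangeEnum_strictMono n k) hnot hnot hcard hcard

theorem minorDet_range_sdiff_singleton_eq_det_submatrix_cons {n k : ℕ} (hk : k ≤ n)
    {i j : Fin n} (hi : (i : ℕ) < k) (hj : (j : ℕ) < k) :
    minorDet M n (range k \ {(i : ℕ)}) (range k \ {(j : ℕ)}) =
      ((M.submatrix Fin.val Fin.val).submatrix (Fin.cons i (complRangeEnum n k))
        (Fin.cons j (complRangeEnum n k))).det := by
  have hmono : ∀ a : Fin n, (a : ℕ) < k →
      StrictMono (Fin.cons a (complRangeEnum n k) : Fin (n - k + 1) → Fin n) := fun a ha =>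
    Fin.strictMono_cons.2
      ⟨fun t => ha.trans_le (le_complRangeEnum n k t), complRangeEnum_strictMono n k⟩
  have hnot : ∀ (a : Fin n) (t : Fin (n - k + 1)),
      ((Fin.cons a (complRangeEnum n k) : Fin (n - k + 1) → Fin n) t : ℕ) ∉
        range k \ {(a : ℕ)} := fun a t => by
    cases t using Fin.cases <;> simp [le_complRangeEnum]
  have hcard : ∀ a : Fin n, (a : ℕ) < k → #(range n \ (range k \ {(a : ℕ)})) = n - k + 1 :=
    fun a ha => by rw [card_range_sdiff_range_sdiff_singleton hk, if_pos ha]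
  exact minorDet_eq_det_submatrix M (hmono i hi) (hmono j hj) (hnot i) (hnot j) (hcard i hi)
    (hcard j hj)

/-- For `k ≤ i` the minor is not square, so `minorDet` takes its junk value. -/
theorem minorDet_range_sdiff_singleton_eq_zero {n k i j : ℕ} (hk : k ≤ n) (hki : k ≤ i)
    (hj : j < k) : minorDet M n (range k \ {i}) (range k \ {j}) = 0 := by
  refine dif_neg ?_
  rw [card_range_sdiff_range_sdiff_singleton hk, card_range_sdiff_range_sdiff_singleton hk,
    if_pos hj, if_neg hki.not_gt]
  omega

end minorDet

-- Indices are 0-based; the sign `(-1) ^ (i + j)` has the parity of the 1-based one.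
/-- **Column expansion identity** (Theorem 2.4): for an `n × n` matrix with `n ≥ k` and
a fixed column `j` with `1 ≤ j ≤ k` (0-based here; the sign `(−1)^{i+j}` has the same
parity in 0-based and 1-based indexing),
`det M · det M_{[k],[k]} = Σ_{i=1}^{k} (−1)^{i+j} det M_{{i},{j}} · det M_{[k]∖{i},[k]∖{j}}`. -/
theorem column_expansion {R : Type*} [CommRing R] (n k j : ℕ) (hk : k ≤ n) (hj : j < k)
    (M : Matrix ℕ ℕ R) :
    minorDet M n ∅ ∅ * minorDet M n (Finset.range k) (Finset.range k) =
      ∑ i ∈ Finset.range k, (-1 : R) ^ (i + j) *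
        (minorDet M n {i} {j} *
          minorDet M n (Finset.range k \ {i}) (Finset.range k \ {j})) := by
  obtain ⟨N, rfl⟩ : ∃ N, n = N + 1 := ⟨n - 1, by omega⟩
  obtain ⟨j, rfl⟩ : ∃ j' : Fin (N + 1), (j' : ℕ) = j := ⟨⟨j, by omega⟩, rfl⟩
  set A : Matrix (Fin (N + 1)) (Fin (N + 1)) R := M.submatrix Fin.val Fin.val
  set e := complRangeEnum (N + 1) k
  have hterm : ∀ i : Fin (N + 1),
      A.adjugate j i * (A.submatrix (Fin.cons i e) (Fin.cons j e)).det =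
        (-1 : R) ^ ((i : ℕ) + j) * (minorDet M (N + 1) {(i : ℕ)} {(j : ℕ)} *
          minorDet M (N + 1) (range k \ {(i : ℕ)}) (range k \ {(j : ℕ)})) := fun i => by
    rcases lt_or_ge (i : ℕ) k with hik | hki
    · rw [Matrix.adjugate_fin_succ_eq_det_submatrix,
        minorDet_singleton_eq_det_submatrix_succAbove,
        minorDet_range_sdiff_singleton_eq_det_submatrix_cons M hk hik hj, mul_assoc]
    · obtain ⟨t, ht⟩ := exists_complRangeEnum_eq hki
      rw [Matrix.det_submatrix_cons_eq_zero A t ht,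
        minorDet_range_sdiff_singleton_eq_zero M hk hki hj, mul_zero, mul_zero, mul_zero]
  rw [minorDet_empty_eq_det, minorDet_range_eq_det_submatrix M hk,
    Matrix.det_mul_det_submatrix_eq_sum_adjugate_mul A j e
      (fun t h => absurd hj (by rw [← h]; exact (le_complRangeEnum _ k t).not_gt))]
  simp only [hterm]
  rw [Fin.sum_univ_eq_sum_range fun i => (-1 : R) ^ (i + j) * (minorDet M (N + 1) {i} {(j : ℕ)} *
    minorDet M (N + 1) (range k \ {i}) (range k \ {(j : ℕ)}))]
  refine (sum_subset (range_subset_range.2 hk) fun i _ hik => ?_).symm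
  rw [minorDet_range_sdiff_singleton_eq_zero M hk (by simpa using hik) hj, mul_zero, mul_zero]
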